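/- arXiv:1906.03212 — 4 statements merged into one kernel-verified Lean document; each statement's English description precedes it below -/
import Mathlib

section
/- Let F : ℝ^d → ℝ satisfy: F is C³ with lim_{|x|→∞} F(x) = ∞, and there are constants a₁, a₂, c₁, c₂, c₃, c₄ > 0 with a₂ < 2a₁ − 2 such that for all x ∈ ℝ^d: c₁|x|^{a₁} − c₂ ≤ |∇F(x)|² ≤ c₃|x|^{a₂} + c₄ and c₁|x|^{a₁} − c₂ ≤ (|∇F(x)| − 2ΔF(x))² ≤ c₃|x|^{a₂} + c₄. Then there exist constants c̃₁, c̃₂, c̃₃, c̃₄ > 0 such that for all x ∈ ℝ^d, c̃₁|x|^{ã₁} − c̃₂ ≤ |F(x)| ≤ c̃₃|x|^{ã₂} + c̃₄, where ã₁ = a₁/2 + 1 and ã₂ = a₂/2 + 1. -/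
/-!
The upper bound is the mean value inequality on the segment from `0` to `x`, using
`|∇F| ≤ √c₃ ‖x‖^(a₂/2) + √c₄` on the ball of radius `‖x‖`.

The lower bound comes from a compactness form of Ekeland's principle: since `F` is coercive,
`F + λ‖· - x‖` attains its minimum at some `y`, and then `|∇F y| ≤ λ` and
`λ ‖y - x‖ ≤ F x - min F`. With `λ = (F x - min F + 1) / (‖x‖ / 2)` the point `y` has norm at
least `‖x‖ / 2`, so `c₁ (‖x‖/2)^a₁ - c₂ ≤ λ²`, i.e. `F x - min F + 1 ≳ ‖x‖^(a₁/2 + 1)` for large `x`.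
-/

open MeasureTheory Filter Real

open Bornology

noncomputable def lap {d : ℕ} (f : EuclideanSpace ℝ (Fin d) → ℝ)
    (x : EuclideanSpace ℝ (Fin d)) : ℝ :=
  ∑ i, fderiv ℝ (fun y => fderiv ℝ f y (EuclideanSpace.single i 1)) x
    (EuclideanSpace.single i 1)

theorem self_le_rpow_add_one {r e : ℝ} (hr : 0 ≤ r) (he : 1 ≤ e) : r ≤ r ^ e + 1 := by
  rcases le_total r 1 with hr1 | hr1
  · linarith [rpow_nonneg hr e]
  · linarith [self_le_rpow_of_one_le hr1 he]

theorem le_sqrt_mul_rpow_add_sqrt {u t a c₃ c₄ : ℝ} (ht : 0 ≤ t) (hc₃ : 0 ≤ c₃) (hc₄ : 0 ≤ c₄)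
    (h : u ^ 2 ≤ c₃ * t ^ a + c₄) : u ≤ √c₃ * t ^ (a / 2) + √c₄ := by
  have hsq : (t ^ (a / 2)) ^ 2 = t ^ a := by
    rw [← rpow_mul_natCast ht]; norm_num
  refine le_of_sq_le_sq (h.trans ?_) (by positivity)
  nlinarith [sq_sqrt hc₃, sq_sqrt hc₄, mul_nonneg (mul_nonneg (sqrt_nonneg c₃) (sqrt_nonneg c₄))
    (rpow_nonneg ht (a / 2))]

theorem sqrt_mul_rpow_le_of_sub_le_sq_div {a c₁ c₂ s ε : ℝ} (hc₁ : 0 ≤ c₁) (hs : 0 < s)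
    (hε : 0 ≤ ε) (hc₂ : c₂ ≤ c₁ * s ^ a / 2) (h : c₁ * s ^ a - c₂ ≤ (ε / s) ^ 2) :
    √(c₁ / 2) * s ^ (a / 2 + 1) ≤ ε := by
  have hsq : (√(c₁ / 2) * s ^ (a / 2 + 1)) ^ 2 = c₁ * s ^ a / 2 * s ^ 2 := by
    rw [mul_pow, sq_sqrt (by positivity), ← rpow_mul_natCast hs.le,
      show (a / 2 + 1) * ((2 : ℕ) : ℝ) = a + 2 by push_cast; ring, rpow_add hs, rpow_two]
    ring
  refine le_of_sq_le_sq ?_ hε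
  rw [hsq]
  have : (ε / s) ^ 2 * s ^ 2 = ε ^ 2 := by field_simp
  nlinarith [sq_nonneg s]

section

variable {E : Type*} [NormedAddCommGroup E] {F : E → ℝ}

theorem exists_forall_le_add_norm_sub (hF : Continuous F) (hlim : Tendsto F (cocompact E) atTop)
    {c : ℝ} (hc : 0 ≤ c) (x : E) :
    ∃ y, c * ‖y - x‖ ≤ F x - F y ∧ ∀ z, F y ≤ F z + c * ‖z - y‖ := by
  obtain ⟨y, hy⟩ : ∃ y, ∀ z, F y + c * ‖y - x‖ ≤ F z + c * ‖z - x‖ :=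
    (hF.add (by fun_prop)).exists_forall_le (hlim.atTop_add_nonneg fun z => by positivity)
  refine ⟨y, le_sub_iff_add_le'.2 (by simpa using hy x), fun z => ?_⟩
  have := mul_le_mul_of_nonneg_left (norm_sub_le_norm_sub_add_norm_sub z y x) hc
  linarith [hy z]

theorem exists_forall_rpow_sub_le_of_eventually {m K e D : ℝ} (hm : ∀ x, m ≤ F x) (hK : 0 ≤ K)
    (he : 0 ≤ e) (h : ∀ᶠ x in cobounded E, K * ‖x‖ ^ e - D ≤ F x) :
    ∃ C, 0 < C ∧ ∀ x, K * ‖x‖ ^ e - C ≤ F x := by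
  obtain ⟨R, -, hR⟩ := hasBasis_cobounded_norm.eventually_iff.1 h
  refine ⟨K * |R| ^ e + |m| + |D| + 1, by positivity, fun x => ?_⟩
  rcases le_or_gt R ‖x‖ with hx | hx
  · linarith [hR hx, le_abs_self D, abs_nonneg m, rpow_nonneg (abs_nonneg R) e,
      mul_nonneg hK (rpow_nonneg (abs_nonneg R) e)]
  · have : K * ‖x‖ ^ e ≤ K * |R| ^ e :=
      mul_le_mul_of_nonneg_left (rpow_le_rpow (norm_nonneg x) (hx.le.trans (le_abs_self R)) he) hK
    linarith [hm x, neg_abs_le m, abs_nonneg D]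

variable [NormedSpace ℝ E]

theorem neg_mul_norm_le_fderiv_apply {y : E} {c : ℝ} (hF : DifferentiableAt ℝ F y)
    (hmin : ∀ z, F y ≤ F z + c * ‖z - y‖) (v : E) : -(c * ‖v‖) ≤ fderiv ℝ F y v := by
  set φ : ℝ → ℝ := fun t => F (y + t • v) + c * ‖v‖ * t
  have hφ : HasDerivAt φ (fderiv ℝ F y v + c * ‖v‖) 0 := by
    have hline : HasDerivAt (fun t : ℝ => y + t • v) v 0 := by
      simpa using ((hasDerivAt_id (0 : ℝ)).smul_const v).const_add y
    exact ((hF.hasFDerivAt.comp_hasDerivAt_of_eq 0 hline (by simp)).add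
      ((hasDerivAt_id (0 : ℝ)).const_mul (c * ‖v‖))).congr_deriv (by simp)
  have hφmin : IsLocalMinOn φ (Set.Ici 0) 0 := by
    refine IsMinOn.localize fun t (ht : 0 ≤ t) => ?_
    have := hmin (y + t • v)
    simp only [add_sub_cancel_left, norm_smul, norm_of_nonneg ht] at this
    simp only [φ, zero_smul, add_zero, mul_zero, Set.mem_ofPred_eq]
    linarith
  have := hφmin.hasFDerivWithinAt_nonneg hφ.hasDerivWithinAt.hasFDerivWithinAt (y := 1)
    (mem_posTangentConeAt_of_segment_subset (by simp [segment_eq_Icc, Set.Icc_subset_Ici_self]))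
  simp only [ContinuousLinearMap.toSpanSingleton_apply, smul_eq_mul, one_mul] at this
  linarith

theorem norm_fderiv_le_of_forall_le_add_norm_sub {y : E} {c : ℝ} (hc : 0 ≤ c)
    (hF : DifferentiableAt ℝ F y) (hmin : ∀ z, F y ≤ F z + c * ‖z - y‖) :
    ‖fderiv ℝ F y‖ ≤ c := by
  refine (fderiv ℝ F y).opNorm_le_bound hc fun v => abs_le.2 ⟨?_, ?_⟩
  · exact neg_mul_norm_le_fderiv_apply hF hmin v
  · simpa using neg_mul_norm_le_fderiv_apply hF hmin (-v)

theorem exists_norm_sub_le_and_norm_fderiv_le (hF : Differentiable ℝ F)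
    (hlim : Tendsto F (cocompact E) atTop) {x : E} {ε s : ℝ} (hε : 0 < ε) (hs : 0 < s)
    (hx : ∀ z, F x ≤ F z + ε) : ∃ y, ‖y - x‖ ≤ s ∧ ‖fderiv ℝ F y‖ ≤ ε / s := by
  obtain ⟨y, hyx, hmin⟩ := exists_forall_le_add_norm_sub hF.continuous hlim (c := ε / s)
    (by positivity) x
  refine ⟨y, ?_, norm_fderiv_le_of_forall_le_add_norm_sub (by positivity) (hF y) hmin⟩
  have : ε / s * ‖y - x‖ ≤ ε / s * s := by
    rw [div_mul_cancel₀ _ hs.ne']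
    linarith [hx y]
  exact le_of_mul_le_mul_left this (by positivity)

theorem exists_rpow_sub_le_of_sq_norm_fderiv_ge (hF : Differentiable ℝ F)
    (hlim : Tendsto F (cocompact E) atTop) {a c₁ c₂ : ℝ} (ha : 0 < a) (hc₁ : 0 < c₁)
    (h : ∀ x, c₁ * ‖x‖ ^ a - c₂ ≤ ‖fderiv ℝ F x‖ ^ 2) :
    ∃ K C, 0 < K ∧ 0 < C ∧ ∀ x, K * ‖x‖ ^ (a / 2 + 1) - C ≤ F x := by
  obtain ⟨x₀, hx₀⟩ := hF.continuous.exists_forall_le hlim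
  have hlarge : ∀ᶠ x in cobounded E, 2 * c₂ / c₁ ≤ (‖x‖ / 2) ^ a ∧ 0 < ‖x‖ :=
    (((tendsto_rpow_atTop ha).comp (tendsto_norm_cobounded_atTop.atTop_div_const two_pos)
      ).eventually_ge_atTop _).and (eventually_cobounded_le_norm 1 |>.mono fun x hx => by linarith)
  have hgrowth : ∀ᶠ x in cobounded E,
      √(c₁ / 2) / 2 ^ (a / 2 + 1) * ‖x‖ ^ (a / 2 + 1) - (1 - F x₀) ≤ F x := by
    filter_upwards [hlarge] with x ⟨hxa, hx⟩
    obtain ⟨y, hyx, hy⟩ := exists_norm_sub_le_and_norm_fderiv_le hF hlim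
      (x := x) (ε := F x - F x₀ + 1) (s := ‖x‖ / 2) (by linarith [hx₀ x]) (by positivity)
      (fun z => by linarith [hx₀ z])
    have hy_norm : ‖x‖ / 2 ≤ ‖y‖ := by linarith [norm_sub_norm_le x y, norm_sub_rev x y]
    have hgrad : c₁ * (‖x‖ / 2) ^ a - c₂ ≤ ((F x - F x₀ + 1) / (‖x‖ / 2)) ^ 2 :=
      calc c₁ * (‖x‖ / 2) ^ a - c₂ ≤ c₁ * ‖y‖ ^ a - c₂ := by gcongr
        _ ≤ ‖fderiv ℝ F y‖ ^ 2 := h y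
        _ ≤ _ := by gcongr
    have := sqrt_mul_rpow_le_of_sub_le_sq_div hc₁.le (by positivity) (by linarith [hx₀ x])
      (by rw [div_le_iff₀ hc₁] at hxa; linarith) hgrad
    rw [div_rpow (norm_nonneg x) zero_le_two] at this
    linarith [show √(c₁ / 2) * (‖x‖ ^ (a / 2 + 1) / 2 ^ (a / 2 + 1)) =
      √(c₁ / 2) / 2 ^ (a / 2 + 1) * ‖x‖ ^ (a / 2 + 1) by ring]
  obtain ⟨C, hC, hbound⟩ := exists_forall_rpow_sub_le_of_eventually hx₀ (by positivity)
    (by positivity) hgrowth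
  exact ⟨_, C, by positivity, hC, hbound⟩

theorem abs_le_rpow_add_of_sq_norm_fderiv_le (hF : Differentiable ℝ F) {a c₃ c₄ : ℝ}
    (ha : 0 ≤ a) (hc₃ : 0 ≤ c₃) (hc₄ : 0 ≤ c₄) (h : ∀ x, ‖fderiv ℝ F x‖ ^ 2 ≤ c₃ * ‖x‖ ^ a + c₄)
    (x : E) : |F x| ≤ (√c₃ + √c₄) * ‖x‖ ^ (a / 2 + 1) + (√c₄ + |F 0|) := by
  have hbound : ∀ y ∈ Metric.closedBall (0 : E) ‖x‖,
      ‖fderiv ℝ F y‖ ≤ √c₃ * ‖x‖ ^ (a / 2) + √c₄ := fun y hy =>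
    le_sqrt_mul_rpow_add_sqrt (norm_nonneg x) hc₃ hc₄ ((h y).trans (by
      gcongr; simpa using hy))
  have hmvt : |F x - F 0| ≤ (√c₃ * ‖x‖ ^ (a / 2) + √c₄) * ‖x‖ := by
    simpa using (convex_closedBall (0 : E) ‖x‖).norm_image_sub_le_of_norm_fderiv_le
      (fun y _ => hF y) hbound (Metric.mem_closedBall_self (norm_nonneg x)) (by simp)
  have hpow : ‖x‖ ^ (a / 2) * ‖x‖ = ‖x‖ ^ (a / 2 + 1) :=
    (rpow_add_one' (norm_nonneg x) (by positivity)).symm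
  have hlin := self_le_rpow_add_one (norm_nonneg x) (show 1 ≤ a / 2 + 1 by linarith)
  calc |F x| ≤ |F x - F 0| + |F 0| := by linarith [abs_sub_abs_le_abs_sub (F x) (F 0)]
    _ ≤ √c₃ * (‖x‖ ^ (a / 2) * ‖x‖) + √c₄ * ‖x‖ + |F 0| := by linarith
    _ ≤ _ := by rw [hpow]; nlinarith [sqrt_nonneg c₄]

end

theorem stmt_0_general {d : ℕ} (F : EuclideanSpace ℝ (Fin d) → ℝ)
    (hF : ContDiff ℝ 3 F)
    (hlim : Tendsto F (cocompact (EuclideanSpace ℝ (Fin d))) atTop)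
    (a₁ a₂ c₁ c₂ c₃ c₄ : ℝ)
    (ha₁ : 0 < a₁) (ha₂ : 0 < a₂) (hc₁ : 0 < c₁)
    (hc₃ : 0 < c₃) (hc₄ : 0 < c₄)
    (hgrad_lo : ∀ x, c₁ * ‖x‖ ^ a₁ - c₂ ≤ ‖gradient F x‖ ^ 2)
    (hgrad_hi : ∀ x, ‖gradient F x‖ ^ 2 ≤ c₃ * ‖x‖ ^ a₂ + c₄) :
    ∃ C₁ C₂ C₃ C₄ : ℝ, 0 < C₁ ∧ 0 < C₂ ∧ 0 < C₃ ∧ 0 < C₄ ∧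
      ∀ x, C₁ * ‖x‖ ^ (a₁ / 2 + 1) - C₂ ≤ |F x| ∧
        |F x| ≤ C₃ * ‖x‖ ^ (a₂ / 2 + 1) + C₄ := by
  have hdiff : Differentiable ℝ F := hF.differentiable (by norm_num)
  have hgrad x : ‖gradient F x‖ = ‖fderiv ℝ F x‖ :=
    (InnerProductSpace.toDual ℝ _).symm.norm_map _
  obtain ⟨K, C, hK, hC, hlower⟩ :=
    exists_rpow_sub_le_of_sq_norm_fderiv_ge hdiff hlim ha₁ hc₁ (by simpa [hgrad] using hgrad_lo)
  refine ⟨K, C, √c₃ + √c₄, √c₄ + |F 0|, hK, hC, by positivity, by positivity,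
    fun x => ⟨(hlower x).trans (le_abs_self _), ?_⟩⟩
  exact abs_le_rpow_add_of_sq_norm_fderiv_le hdiff ha₂.le hc₃.le hc₄.le
    (by simpa [hgrad] using hgrad_hi) x

theorem stmt_0 {d : ℕ} (F : EuclideanSpace ℝ (Fin d) → ℝ)
    (hF : ContDiff ℝ 3 F)
    (hlim : Tendsto F (cocompact (EuclideanSpace ℝ (Fin d))) atTop)
    (a₁ a₂ c₁ c₂ c₃ c₄ : ℝ)
    (ha₁ : 0 < a₁) (ha₂ : 0 < a₂) (hc₁ : 0 < c₁) (hc₂ : 0 < c₂)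
    (hc₃ : 0 < c₃) (hc₄ : 0 < c₄) (hgap : a₂ < 2 * a₁ - 2)
    (hgrad_lo : ∀ x, c₁ * ‖x‖ ^ a₁ - c₂ ≤ ‖gradient F x‖ ^ 2)
    (hgrad_hi : ∀ x, ‖gradient F x‖ ^ 2 ≤ c₃ * ‖x‖ ^ a₂ + c₄)
    (hlap_lo : ∀ x, c₁ * ‖x‖ ^ a₁ - c₂ ≤ (‖gradient F x‖ - 2 * lap F x) ^ 2)
    (hlap_hi : ∀ x, (‖gradient F x‖ - 2 * lap F x) ^ 2 ≤ c₃ * ‖x‖ ^ a₂ + c₄) :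
    ∃ C₁ C₂ C₃ C₄ : ℝ, 0 < C₁ ∧ 0 < C₂ ∧ 0 < C₃ ∧ 0 < C₄ ∧
      ∀ x, C₁ * ‖x‖ ^ (a₁ / 2 + 1) - C₂ ≤ |F x| ∧
        |F x| ≤ C₃ * ‖x‖ ^ (a₂ / 2 + 1) + C₄ :=
  stmt_0_general F hF hlim a₁ a₂ c₁ c₂ c₃ c₄ ha₁ ha₂ hc₁ hc₃ hc₄ hgrad_lo hgrad_hi
end

section
/- Let F : ℝ^d → ℝ be C² with lim_{|x|→∞} F(x) = ∞, and suppose there are constants c₁, c₂ > 0 and a₁ > 0 such that |∇F(x)|² ≥ c₁|x|^{a₁} − c₂ for all x ∈ ℝ^d. Then there exist constants c̃₁, c̃₂ > 0 such that F(x) ≥ c̃₁|x|^{a₁/2 + 1} − c̃₂ for all x ∈ ℝ^d. -/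
open Filter Real

/-!
Let `m` be the minimum of `F`, fix `x` and put `r = ‖x‖ / 2`. A minimizer `y` of
`F + K ‖· - x‖` with `K = (F x - m) / r` lies within `r` of `x`, so `‖y‖ ≥ r`, and at `y` the
first-order condition gives `‖∇F y‖ ≤ K`. Once `c₁ r ^ a₁ ≥ 2 c₂`, the lower bound on the
gradient forces `K ≥ √(c₁ / 2) r ^ (a₁ / 2)`, that is `F x - m ≥ √(c₁ / 2) r ^ (a₁ / 2 + 1)`.
-/

open Set in
theorem HasFDerivAt.neg_le_of_forall_le_add_mul_dist {E : Type*} [NormedAddCommGroup E]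
    [NormedSpace ℝ E] {f : E → ℝ} {f' : E →L[ℝ] ℝ} {y : E} {K : ℝ} (hf : HasFDerivAt f f' y)
    (h : ∀ z, f y ≤ f z + K * dist z y) (w : E) : -(K * ‖w‖) ≤ f' w := by
  set ψ : ℝ → ℝ := fun t => f (y + t • w) + t * (K * ‖w‖)
  have hmin : IsMinOn ψ (Ici 0) 0 := fun t (ht : 0 ≤ t) => by
    simpa [ψ, dist_eq_norm, norm_smul, abs_of_nonneg ht, mul_left_comm] using h (y + t • w)
  have hψ : HasDerivAt ψ (f' w + K * ‖w‖) 0 := by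
    have hline : HasDerivAt (fun t : ℝ => y + t • w) w 0 := by
      simpa using ((hasDerivAt_id (0 : ℝ)).smul_const w).const_add y
    exact (hf.comp_hasDerivAt_of_eq 0 hline (by simp)).add (hasDerivAt_mul_const (K * ‖w‖))
  have hone : (1 : ℝ) ∈ posTangentConeAt (Ici 0) 0 :=
    mem_posTangentConeAt_of_segment_subset
      (by rw [zero_add, segment_eq_Icc zero_le_one]; exact Icc_subset_Ici_self)
  have hderiv := hmin.localize.hasFDerivWithinAt_nonneg hψ.hasFDerivAt.hasFDerivWithinAt hone
  simpa [neg_le_iff_add_nonneg] using hderiv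

theorem HasFDerivAt.norm_le_of_forall_le_add_mul_dist {E : Type*} [NormedAddCommGroup E]
    [NormedSpace ℝ E] {f : E → ℝ} {f' : E →L[ℝ] ℝ} {y : E} {K : ℝ} (hf : HasFDerivAt f f' y)
    (hK : 0 ≤ K) (h : ∀ z, f y ≤ f z + K * dist z y) : ‖f'‖ ≤ K := by
  refine f'.opNorm_le_bound hK fun w => abs_le.2 ⟨?_, ?_⟩
  · exact hf.neg_le_of_forall_le_add_mul_dist h w
  · simpa [neg_le] using hf.neg_le_of_forall_le_add_mul_dist h (-w)

theorem norm_gradient_le_of_forall_le_add_mul_dist {E : Type*} [NormedAddCommGroup E]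
    [InnerProductSpace ℝ E] [CompleteSpace E] {f : E → ℝ} {y : E} {K : ℝ}
    (hf : DifferentiableAt ℝ f y) (hK : 0 ≤ K) (h : ∀ z, f y ≤ f z + K * dist z y) :
    ‖gradient f y‖ ≤ K := by
  rw [gradient, LinearIsometryEquiv.norm_map]
  exact hf.hasFDerivAt.norm_le_of_forall_le_add_mul_dist hK h

/-- A weak form of Ekeland's variational principle: `y` minimizes `f + K * dist · x` with
`K = (f x - m) / r`. -/
theorem Continuous.exists_dist_le_forall_le_add_mul_dist {α : Type*} [PseudoMetricSpace α]
    {f : α → ℝ} (hf : Continuous f) (hlim : Tendsto f (cocompact α) atTop) {m : ℝ}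
    (hm : ∀ z, m ≤ f z) (x : α) {r : ℝ} (hr : 0 < r) :
    ∃ y, dist y x ≤ r ∧ ∀ z, f y ≤ f z + (f x - m) / r * dist z y := by
  rcases (hm x).eq_or_lt with hx | hx
  · exact ⟨x, by simpa using hr.le, fun z => by simpa [← hx] using hm z⟩
  set K := (f x - m) / r
  have hK : 0 < K := div_pos (sub_pos.2 hx) hr
  set g := fun z => f z + K * dist z x
  have hg : Continuous g := hf.add (continuous_const.mul (continuous_id.dist continuous_const))
  have hglim : Tendsto g (cocompact α) atTop :=
    tendsto_atTop_mono (fun z => le_add_of_nonneg_right (by positivity)) hlim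
  have : Nonempty α := ⟨x⟩
  obtain ⟨y, hy⟩ := hg.exists_forall_le hglim
  have hyx : f y + K * dist y x ≤ f x := by simpa [g] using hy x
  refine ⟨y, le_of_mul_le_mul_left ?_ hK, fun z => ?_⟩
  · have hKr : K * r = f x - m := div_mul_cancel₀ _ hr.ne'
    linarith [hm y]
  · have hgz : f y + K * dist y x ≤ f z + K * dist z x := hy z
    linarith [mul_le_mul_of_nonneg_left (dist_triangle z y x) hK.le]

theorem mul_le_sub_of_forall_le_norm_gradient {E : Type*} [NormedAddCommGroup E]
    [InnerProductSpace ℝ E] [ProperSpace E] {f : E → ℝ} (hf : Differentiable ℝ f)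
    (hlim : Tendsto f (cocompact E) atTop) {m : ℝ} (hm : ∀ z, m ≤ f z) {x : E} {r s : ℝ}
    (hr : 0 < r) (hs : ∀ y, dist y x ≤ r → s ≤ ‖gradient f y‖) : r * s ≤ f x - m := by
  obtain ⟨y, hyx, hy⟩ := hf.continuous.exists_dist_le_forall_le_add_mul_dist hlim hm x hr
  have hK : 0 ≤ (f x - m) / r := div_nonneg (sub_nonneg.2 (hm x)) hr.le
  rw [mul_comm, ← le_div_iff₀ hr]
  exact (hs y hyx).trans (norm_gradient_le_of_forall_le_add_mul_dist (hf y) hK hy)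

theorem exists_forall_norm_ge_add_mul_rpow_le {E : Type*} [NormedAddCommGroup E]
    [InnerProductSpace ℝ E] [ProperSpace E] {f : E → ℝ} (hf : Differentiable ℝ f)
    (hlim : Tendsto f (cocompact E) atTop) {m : ℝ} (hm : ∀ z, m ≤ f z) {a c₁ c₂ : ℝ}
    (ha : 0 < a) (hc₁ : 0 < c₁) (hgrad : ∀ x, c₁ * ‖x‖ ^ a - c₂ ≤ ‖gradient f x‖ ^ 2) :
    ∃ R, ∀ x, R ≤ ‖x‖ →
      m + √(c₁ / 2) / 2 ^ (a / 2 + 1) * ‖x‖ ^ (a / 2 + 1) ≤ f x := by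
  have hlarge : ∀ᶠ t in atTop, c₂ ≤ c₁ / 2 * (t / 2) ^ a :=
    (((tendsto_rpow_atTop ha).comp (tendsto_id.atTop_div_const two_pos)).const_mul_atTop
      (by positivity)).eventually_ge_atTop c₂
  obtain ⟨R, hR⟩ := eventually_atTop.1 hlarge
  refine ⟨max R 1, fun x hx => ?_⟩
  set r := ‖x‖ / 2 with hr_def
  have hr : 0 < r := by have := le_of_max_le_right hx; positivity
  have hs : ∀ y, dist y x ≤ r → √(c₁ / 2) * r ^ (a / 2) ≤ ‖gradient f y‖ := by
    intro y hy
    have hry : r ≤ ‖y‖ := by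
      linarith [norm_sub_norm_le x y, dist_eq_norm x y, dist_comm x y]
    rw [← pow_le_pow_iff_left₀ (by positivity) (norm_nonneg _) two_ne_zero]
    calc (√(c₁ / 2) * r ^ (a / 2)) ^ 2 = c₁ * r ^ a - c₁ / 2 * r ^ a := by
          rw [mul_pow, Real.sq_sqrt (by positivity), ← Real.rpow_mul_natCast hr.le]; ring_nf
      _ ≤ c₁ * ‖y‖ ^ a - c₂ := by
          gcongr
          exact hR _ (le_of_max_le_left hx)
      _ ≤ ‖gradient f y‖ ^ 2 := hgrad y
  have hgain := mul_le_sub_of_forall_le_norm_gradient hf hlim hm hr hs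
  have hpow : r * (√(c₁ / 2) * r ^ (a / 2)) =
      √(c₁ / 2) / 2 ^ (a / 2 + 1) * ‖x‖ ^ (a / 2 + 1) := by
    rw [show ‖x‖ = 2 * r by ring, Real.mul_rpow zero_le_two hr.le, Real.rpow_add hr,
      Real.rpow_one]
    field_simp
  linarith

theorem exists_pos_forall_mul_rpow_sub_le {E : Type*} [SeminormedAddCommGroup E] {f : E → ℝ}
    {m C p R : ℝ} (hC : 0 ≤ C) (hp : 0 ≤ p) (hm : ∀ x, m ≤ f x)
    (hR : ∀ x, R ≤ ‖x‖ → m + C * ‖x‖ ^ p ≤ f x) :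
    ∃ C₂ > 0, ∀ x, C * ‖x‖ ^ p - C₂ ≤ f x := by
  refine ⟨C * |R| ^ p + |m| + 1, by positivity, fun x => ?_⟩
  have hCR : 0 ≤ C * |R| ^ p := by positivity
  rcases le_or_gt R ‖x‖ with hx | hx
  · linarith [hR x hx, neg_abs_le m]
  · have : C * ‖x‖ ^ p ≤ C * |R| ^ p := by
      gcongr
      exact hx.le.trans (le_abs_self R)
    linarith [hm x, neg_abs_le m]

theorem stmt_2_general {d : ℕ} (F : EuclideanSpace ℝ (Fin d) → ℝ)
    (hF : ContDiff ℝ 2 F)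
    (hlim : Tendsto F (cocompact (EuclideanSpace ℝ (Fin d))) atTop)
    (a₁ c₁ c₂ : ℝ) (ha₁ : 0 < a₁) (hc₁ : 0 < c₁)
    (hgrad_lo : ∀ x, c₁ * ‖x‖ ^ a₁ - c₂ ≤ ‖gradient F x‖ ^ 2) :
    ∃ C₁ C₂ : ℝ, 0 < C₁ ∧ 0 < C₂ ∧
      ∀ x, C₁ * ‖x‖ ^ (a₁ / 2 + 1) - C₂ ≤ F x := by
  have hFd : Differentiable ℝ F := hF.differentiable two_ne_zero
  obtain ⟨x₀, hx₀⟩ := hF.continuous.exists_forall_le hlim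
  obtain ⟨R, hR⟩ :=
    exists_forall_norm_ge_add_mul_rpow_le hFd hlim hx₀ ha₁ hc₁ hgrad_lo
  obtain ⟨C₂, hC₂, hbound⟩ :=
    exists_pos_forall_mul_rpow_sub_le (by positivity) (by positivity) hx₀ hR
  exact ⟨_, C₂, by positivity, hC₂, hbound⟩

theorem stmt_2 {d : ℕ} (F : EuclideanSpace ℝ (Fin d) → ℝ)
    (hF : ContDiff ℝ 2 F)
    (hlim : Tendsto F (cocompact (EuclideanSpace ℝ (Fin d))) atTop)
    (a₁ c₁ c₂ : ℝ) (ha₁ : 0 < a₁) (hc₁ : 0 < c₁) (hc₂ : 0 < c₂)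
    (hgrad_lo : ∀ x, c₁ * ‖x‖ ^ a₁ - c₂ ≤ ‖gradient F x‖ ^ 2) :
    ∃ C₁ C₂ : ℝ, 0 < C₁ ∧ 0 < C₂ ∧
      ∀ x, C₁ * ‖x‖ ^ (a₁ / 2 + 1) - C₂ ≤ F x :=
  stmt_2_general F hF hlim a₁ c₁ c₂ ha₁ hc₁ hgrad_lo
end

section
/- Let π : ℝ^d → ℝ be C² and let f : ℝ^d → ℝ be C² with compact support. Then ∫_{ℝ^d} |∇(πf)(x)|² dx + ∫_{ℝ^d} Δπ(x) · π(x) f(x)² dx = ∫_{ℝ^d} π(x)² |∇f(x)|² dx. -/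
/-!
In each direction `v`, the product rule gives the pointwise identity
`(∂ᵥ(p f))² + ∂ᵥ∂ᵥp · p f² = p² (∂ᵥf)² + ∂ᵥ(p f² ∂ᵥp)`,
and the last term, being a directional derivative of a compactly supported `C¹` function,
integrates to zero against Haar measure. Summing over an orthonormal basis gives the theorem.
-/

open MeasureTheory Filter

section Directional

variable {E : Type*} [NormedAddCommGroup E] [NormedSpace ℝ E]

theorem integrable_fderiv_apply_of_hasCompactSupport [MeasurableSpace E] [OpensMeasurableSpace E]
    {μ : Measure E} [IsFiniteMeasureOnCompacts μ] {h : E → ℝ} (hh : ContDiff ℝ 1 h)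
    (hc : HasCompactSupport h) (v : E) :
    Integrable (fun x => fderiv ℝ h x v) μ :=
  ((hh.continuous_fderiv one_ne_zero).clm_apply continuous_const).integrable_of_hasCompactSupport
    (hc.fderiv_apply (𝕜 := ℝ) v)

theorem integral_fderiv_apply_eq_zero [FiniteDimensional ℝ E] [MeasurableSpace E] [BorelSpace E]
    {μ : Measure E} [μ.IsAddHaarMeasure] {h : E → ℝ} (hh : ContDiff ℝ 1 h)
    (hc : HasCompactSupport h) (v : E) :
    ∫ x, fderiv ℝ h x v ∂μ = 0 := by
  have hint : Integrable h μ := hh.continuous.integrable_of_hasCompactSupport hc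
  simpa using integral_mul_fderiv_eq_neg_fderiv_mul_of_integrable (μ := μ) (f := fun _ => (1 : ℝ))
    (g := h) (v := v) (by simp) (by simpa using integrable_fderiv_apply_of_hasCompactSupport hh hc v)
    (by simpa using hint) (fun _ _ => differentiableAt_const _)
    fun x _ => hh.differentiable one_ne_zero x

theorem sq_fderiv_mul_apply_add_fderiv_fderiv_apply_mul {p f : E → ℝ} {x v : E}
    (hp : DifferentiableAt ℝ p x) (hf : DifferentiableAt ℝ f x)
    (hp' : DifferentiableAt ℝ (fun y => fderiv ℝ p y v) x) :
    fderiv ℝ (fun y => p y * f y) x v ^ 2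
        + fderiv ℝ (fun y => fderiv ℝ p y v) x v * (p x * f x ^ 2) =
      p x ^ 2 * fderiv ℝ f x v ^ 2
        + fderiv ℝ (fun y => p y * f y ^ 2 * fderiv ℝ p y v) x v := by
  have hf2 : DifferentiableAt ℝ (fun y => f y ^ 2) x := hf.pow 2
  have hpf2 : DifferentiableAt ℝ (fun y => p y * f y ^ 2) x := hp.mul hf2
  rw [fderiv_fun_mul hp hf, fderiv_fun_mul hpf2 hp', fderiv_fun_mul hp hf2,
    fderiv_fun_pow 2 hf]
  simp only [add_apply, smul_apply, smul_eq_mul]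
  ring

end Directional

section Gradient

variable {F : Type*} [NormedAddCommGroup F] [InnerProductSpace ℝ F] [CompleteSpace F]

theorem norm_gradient_sq_eq_sum {ι : Type*} [Fintype ι] (b : OrthonormalBasis ι ℝ F)
    (q : F → ℝ) (x : F) :
    ‖gradient q x‖ ^ 2 = ∑ i, fderiv ℝ q x (b i) ^ 2 := by
  simp_rw [← b.sum_sq_inner_left, inner_gradient_left]

theorem ContDiff.continuous_gradient {q : F → ℝ} (hq : ContDiff ℝ 1 q) :
    Continuous (gradient q) :=
  (InnerProductSpace.toDual ℝ F).symm.continuous.comp (hq.continuous_fderiv one_ne_zero)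

theorem HasCompactSupport.norm_gradient_sq {q : F → ℝ} (hq : HasCompactSupport q) :
    HasCompactSupport (fun x => ‖gradient q x‖ ^ 2) :=
  (hq.fderiv (𝕜 := ℝ)).comp_left (g := fun L => ‖(InnerProductSpace.toDual ℝ F).symm L‖ ^ 2)
    (by simp)

end Gradient

theorem integral_norm_gradient_mul_sq_add_laplacian_mul {F ι : Type*} [NormedAddCommGroup F]
    [InnerProductSpace ℝ F] [FiniteDimensional ℝ F] [MeasurableSpace F] [BorelSpace F]
    [Fintype ι] (b : OrthonormalBasis ι ℝ F) (μ : Measure F) [μ.IsAddHaarMeasure]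
    {p f : F → ℝ} (hp : ContDiff ℝ 2 p) (hf : ContDiff ℝ 2 f) (hsupp : HasCompactSupport f) :
    (∫ x, ‖gradient (fun y => p y * f y) x‖ ^ 2 ∂μ) +
        (∫ x, (∑ i, fderiv ℝ (fun y => fderiv ℝ p y (b i)) x (b i)) * (p x * f x ^ 2) ∂μ) =
      ∫ x, p x ^ 2 * ‖gradient f x‖ ^ 2 ∂μ := by
  have hp1 : ContDiff ℝ 1 p := hp.of_le one_le_two
  have hf1 : ContDiff ℝ 1 f := hf.of_le one_le_two
  have hpf2_supp : HasCompactSupport (fun y => p y * f y ^ 2) :=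
    (hsupp.comp_left (g := fun t : ℝ => t ^ 2) (by simp)).mul_left
  have hdp : ∀ i, ContDiff ℝ 1 (fun y => fderiv ℝ p y (b i)) := fun i =>
    (hp.fderiv_right (m := 1) le_rfl).clm_apply contDiff_const
  have hA : Integrable (fun x => ‖gradient (fun y => p y * f y) x‖ ^ 2) μ := by
    have hpf_supp : HasCompactSupport (fun y => p y * f y) := hsupp.mul_left
    refine Continuous.integrable_of_hasCompactSupport ?_ hpf_supp.norm_gradient_sq
    exact (hp1.mul hf1).continuous_gradient.norm.pow 2
  have hB : Integrable
      (fun x => (∑ i, fderiv ℝ (fun y => fderiv ℝ p y (b i)) x (b i)) * (p x * f x ^ 2)) μ := by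
    refine Continuous.integrable_of_hasCompactSupport ?_ hpf2_supp.mul_left
    refine .mul (continuous_finsetSum _ fun i _ => ?_) (hp.continuous.mul (hf.continuous.pow 2))
    exact ((hdp i).continuous_fderiv one_ne_zero).clm_apply continuous_const
  have hC : Integrable (fun x => p x ^ 2 * ‖gradient f x‖ ^ 2) μ := by
    refine Continuous.integrable_of_hasCompactSupport ?_ hsupp.norm_gradient_sq.mul_left
    exact (hp.continuous.pow 2).mul (hf1.continuous_gradient.norm.pow 2)
  set flux : ι → F → ℝ := fun i y => p y * f y ^ 2 * fderiv ℝ p y (b i)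
  have hflux : ∀ i, ContDiff ℝ 1 (flux i) := fun i => (hp1.mul (hf1.pow 2)).mul (hdp i)
  have hflux_supp : ∀ i, HasCompactSupport (flux i) := fun i => hpf2_supp.mul_right
  have hpointwise : ∀ x,
      ‖gradient (fun y => p y * f y) x‖ ^ 2
          + (∑ i, fderiv ℝ (fun y => fderiv ℝ p y (b i)) x (b i)) * (p x * f x ^ 2) =
        p x ^ 2 * ‖gradient f x‖ ^ 2 + ∑ i, fderiv ℝ (flux i) x (b i) := by
    intro x
    simp only [norm_gradient_sq_eq_sum b, Finset.sum_mul, Finset.mul_sum,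
      ← Finset.sum_add_distrib]
    exact Finset.sum_congr rfl fun i _ => sq_fderiv_mul_apply_add_fderiv_fderiv_apply_mul
      (hp1.differentiable one_ne_zero x) (hf1.differentiable one_ne_zero x)
      ((hdp i).differentiable one_ne_zero x)
  have hdiv : ∀ i, Integrable (fun x => fderiv ℝ (flux i) x (b i)) μ := fun i =>
    integrable_fderiv_apply_of_hasCompactSupport (hflux i) (hflux_supp i) (b i)
  rw [← integral_add hA hB, integral_congr_ae (Eventually.of_forall hpointwise),
    integral_add hC (integrable_finsetSum _ fun i _ => hdiv i),
    integral_finsetSum _ fun i _ => hdiv i,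
    Finset.sum_eq_zero fun i _ => integral_fderiv_apply_eq_zero (hflux i) (hflux_supp i) (b i),
    add_zero]

theorem stmt_10 {d : ℕ} (p f : EuclideanSpace ℝ (Fin d) → ℝ)
    (hp : ContDiff ℝ 2 p) (hf : ContDiff ℝ 2 f)
    (hsupp : HasCompactSupport f) :
    (∫ x, ‖gradient (fun y => p y * f y) x‖ ^ 2) +
        (∫ x, lap p x * (p x * f x ^ 2)) =
      ∫ x, p x ^ 2 * ‖gradient f x‖ ^ 2 := by
  simpa only [lap, EuclideanSpace.basisFun_apply] using
    integral_norm_gradient_mul_sq_add_laplacian_mul (EuclideanSpace.basisFun (Fin d) ℝ) volume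
      hp hf hsupp
end

section
/- In the coupling setup, suppose Q is an (m+1)×(m+1) real matrix, λ₀ = 0, λ₁, …, λ_m ∈ ℝ, Q ξ^{(k)} = −λ_k ξ^{(k)} for all 0 ≤ k ≤ m, and α_i(x) > 0 for all x ∈ E and all i. Let f : E × {0, …, m} → ℝ and g : E × {0, …, m} → ℝ be bounded measurable functions such that for every i ∈ {0, …, m} and every k ∈ {0, …, m}, ∫_E g(x, i) η_k(x) ϖ(dx) = −λ_k ∫_E f(x, i) η_k(x) ϖ(dx). Then for every i ∈ {0, …, m}, ∫_E [ g(x, i) + Σ_{j ≠ i} Q_{ij} (α_j(x)/α_i(x)) (f(x, j) − f(x, i)) ] α_i(x) ϖ(dx) = Σ_{j=0}^m Q_{ij} ∫_E f(x, j) α_j(x) ϖ(dx). -/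
open MeasureTheory Finset

lemma intg_of_bdd {E : Type*} [MeasurableSpace E] (ϖ : Measure E) [IsFiniteMeasure ϖ]
    {h : E → ℝ} (hm : Measurable h) {M : ℝ} (hb : ∀ x, |h x| ≤ M) : Integrable h ϖ :=
  (integrable_const M).mono' hm.aestronglyMeasurable (ae_of_all _ fun x => by simpa using hb x)

theorem stmt_16 {E : Type*} [MeasurableSpace E] (ϖ : Measure E)
    [IsProbabilityMeasure ϖ] (m : ℕ) (hm : 1 ≤ m)
    (η : Fin (m + 1) → E → ℝ)
    (hη0 : ∀ x, η 0 x = 1)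
    (hηmeas : ∀ k, Measurable (η k))
    (hηbdd : ∀ k, ∃ M : ℝ, ∀ x, |η k x| ≤ M)
    (hηint : ∀ k, k ≠ 0 → ∫ x, η k x ∂ϖ = 0)
    (ξ : Fin (m + 1) → Fin (m + 1) → ℝ)
    (hξ0 : ∀ i, ξ 0 i = 1)
    (α : Fin (m + 1) → E → ℝ)
    (hα : ∀ i x, α i x = ∑ k, ξ k i * η k x)
    (hαpos : ∀ i x, 0 < α i x)
    (Q : Matrix (Fin (m + 1)) (Fin (m + 1)) ℝ)
    (lam : Fin (m + 1) → ℝ) (hlam0 : lam 0 = 0)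
    (hQeig : ∀ k, Q.mulVec (ξ k) = fun i => -lam k * ξ k i)
    (f g : E → Fin (m + 1) → ℝ)
    (hfmeas : ∀ i, Measurable fun x => f x i)
    (hgmeas : ∀ i, Measurable fun x => g x i)
    (hfbdd : ∃ M : ℝ, ∀ x i, |f x i| ≤ M)
    (hgbdd : ∃ M : ℝ, ∀ x i, |g x i| ≤ M)
    (heig : ∀ i k, ∫ x, g x i * η k x ∂ϖ = -lam k * ∫ x, f x i * η k x ∂ϖ) :
    ∀ i, ∫ x, (g x i +
          ∑ j ∈ univ.erase i, Q i j * (α j x / α i x) * (f x j - f x i)) *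
          α i x ∂ϖ =
      ∑ j, Q i j * ∫ x, f x j * α j x ∂ϖ := by
  obtain ⟨Mf, hMf⟩ := hfbdd
  obtain ⟨Mg, hMg⟩ := hgbdd
  choose Mη hMη using hηbdd
  have hαmeas : ∀ i, Measurable (α i) := by
    intro i
    have : α i = fun x => ∑ k, ξ k i * η k x := funext (hα i)
    rw [this]
    exact Finset.measurable_sum _ fun k _ => (hηmeas k).const_mul _
  have hαbdd : ∀ i x, |α i x| ≤ ∑ k, |ξ k i| * Mη k := by
    intro i x
    rw [hα]
    refine (Finset.abs_sum_le_sum_abs _ _).trans (Finset.sum_le_sum fun k _ => ?_)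
    rw [abs_mul]
    exact mul_le_mul_of_nonneg_left (hMη k x) (abs_nonneg _)
  -- integrability of products with η k
  have hintη : ∀ (h : E → ℝ) (Mh : ℝ), Measurable h → (∀ x, |h x| ≤ Mh) → ∀ k,
      Integrable (fun x => h x * η k x) ϖ := by
    intro h Mh hmh hb k
    refine intg_of_bdd ϖ (hmh.mul (hηmeas k)) (M := Mh * Mη k) fun x => ?_
    rw [abs_mul]
    exact mul_le_mul (hb x) (hMη k x) (abs_nonneg _) ((abs_nonneg _).trans (hb x))
  have hintα : ∀ (h : E → ℝ) (Mh : ℝ), Measurable h → (∀ x, |h x| ≤ Mh) → ∀ j,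
      Integrable (fun x => h x * α j x) ϖ := by
    intro h Mh hmh hb j
    refine intg_of_bdd ϖ (hmh.mul (hαmeas j)) (M := Mh * ∑ k, |ξ k j| * Mη k) fun x => ?_
    rw [abs_mul]
    exact mul_le_mul (hb x) (hαbdd j x) (abs_nonneg _) ((abs_nonneg _).trans (hb x))
  -- expansion of ∫ h·α j into the η basis
  have expand : ∀ (h : E → ℝ) (Mh : ℝ), Measurable h → (∀ x, |h x| ≤ Mh) → ∀ j,
      ∫ x, h x * α j x ∂ϖ = ∑ k, ξ k j * ∫ x, h x * η k x ∂ϖ := by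
    intro h Mh hmh hb j
    have hpt : ∀ x, h x * α j x = ∑ k, ξ k j * (h x * η k x) := by
      intro x; rw [hα, Finset.mul_sum]
      exact Finset.sum_congr rfl fun k _ => by ring
    simp only [hpt]
    rw [integral_finset_sum _ fun k _ => ((hintη h Mh hmh hb k).const_mul _)]
    exact Finset.sum_congr rfl fun k _ => integral_const_mul _ _
  intro i
  -- key identity : ∫ g_i α_i = ∑_j Q i j ∫ f_i α_j
  have key1 : ∫ x, g x i * α i x ∂ϖ = ∑ j, Q i j * ∫ x, f x i * α j x ∂ϖ := by
    rw [expand (fun x => g x i) Mg (hgmeas i) (fun x => hMg x i) i]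
    have h1 : ∀ k, ξ k i * ∫ x, g x i * η k x ∂ϖ
        = ∑ j, Q i j * (ξ k j * ∫ x, f x i * η k x ∂ϖ) := by
      intro k
      have h2 : -lam k * ξ k i = ∑ j, Q i j * ξ k j := by
        have := congrFun (hQeig k) i
        simp only [Matrix.mulVec, dotProduct] at this
        exact this.symm
      rw [heig i k]
      calc ξ k i * (-lam k * ∫ x, f x i * η k x ∂ϖ)
          = (-lam k * ξ k i) * ∫ x, f x i * η k x ∂ϖ := by ring
        _ = (∑ j, Q i j * ξ k j) * ∫ x, f x i * η k x ∂ϖ := by rw [h2]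
        _ = ∑ j, Q i j * (ξ k j * ∫ x, f x i * η k x ∂ϖ) := by
            rw [Finset.sum_mul]; exact Finset.sum_congr rfl fun j _ => by ring
    simp only [h1]
    rw [Finset.sum_comm]
    refine Finset.sum_congr rfl fun j _ => ?_
    rw [← Finset.mul_sum, expand (fun x => f x i) Mf (hfmeas i) (fun x => hMf x i) j]
  -- pointwise simplification of the integrand
  have hpt : ∀ x, (g x i +
      ∑ j ∈ univ.erase i, Q i j * (α j x / α i x) * (f x j - f x i)) * α i x
      = g x i * α i x + ∑ j ∈ univ.erase i, Q i j * ((f x j - f x i) * α j x) := by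
    intro x
    have hi : α i x ≠ 0 := (hαpos i x).ne'
    rw [add_mul, Finset.sum_mul]
    congr 1
    refine Finset.sum_congr rfl fun j _ => ?_
    field_simp
  simp only [hpt]
  have hintdiff : ∀ j, Integrable (fun x => (f x j - f x i) * α j x) ϖ := by
    intro j
    refine hintα (fun x => f x j - f x i) (Mf + Mf)
      ((hfmeas j).sub (hfmeas i)) (fun x => ?_) j
    exact (abs_sub _ _).trans (add_le_add (hMf x j) (hMf x i))
  rw [integral_add (hintα (fun x => g x i) Mg (hgmeas i) (fun x => hMg x i) i)
      (integrable_finset_sum _ fun j _ => (hintdiff j).const_mul _),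
    integral_finset_sum _ fun j _ => (hintdiff j).const_mul _, key1]
  have hsplit : ∀ j, ∫ x, Q i j * ((f x j - f x i) * α j x) ∂ϖ
      = Q i j * ((∫ x, f x j * α j x ∂ϖ) - ∫ x, f x i * α j x ∂ϖ) := by
    intro j
    rw [integral_const_mul]
    congr 1
    have : (fun x => (f x j - f x i) * α j x)
        = fun x => f x j * α j x - f x i * α j x := by
      funext x; ring
    rw [this, integral_sub (hintα (fun x => f x j) Mf (hfmeas j) (fun x => hMf x j) j)
      (hintα (fun x => f x i) Mf (hfmeas i) (fun x => hMf x i) j)]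
  simp only [hsplit]
  rw [← Finset.add_sum_erase _ (fun j => Q i j * ∫ x, f x i * α j x ∂ϖ) (Finset.mem_univ i),
    ← Finset.add_sum_erase _ (fun j => Q i j * ∫ x, f x j * α j x ∂ϖ) (Finset.mem_univ i),
    add_assoc, ← Finset.sum_add_distrib]
  congr 1
  refine Finset.sum_congr rfl fun j _ => ?_
  ring
end
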